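/- arXiv:1611.09184 — 7 statements merged into one kernel-verified Lean document; each statement's English description precedes it below -/
import Mathlib

section
/- Let c < 0, let u : V → ℝ be a solution of the Kazdan–Warner equation Δu = c − h·e^u, and let φ : V → ℝ be any solution of (Δ + c)φ = h, i.e. (Δφ)_i + c·φ_i = h_i for all i ∈ V. Then φ_i ≥ e^{−u_i} for every vertex i ∈ V. -/
/-- The graph Laplacian: `(Δ f)_i = (1/μ_i) ∑_{j ∼ i} ω_{ij} (f_j - f_i)`. -/
noncomputable def glap {V : Type*} [Fintype V] (G : SimpleGraph V) [DecidableRel G.Adj]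
    (μ : V → ℝ) (ω : V → V → ℝ) (f : V → ℝ) (i : V) : ℝ :=
  (1 / μ i) * ∑ j ∈ G.neighborFinset i, ω i j * (f j - f i)

/-- If `c < 0`, `u` solves the Kazdan–Warner equation `Δu = c - h e^u`, and `φ` solves
`(Δ + c) φ = h`, then `φ ≥ e^{-u}` pointwise. -/
theorem stmt_0 {V : Type*} [Fintype V] (G : SimpleGraph V) [DecidableRel G.Adj]
    (hconn : G.Connected)
    (μ : V → ℝ) (hμ : ∀ i, 0 < μ i)
    (ω : V → V → ℝ) (hsym : ∀ i j, ω i j = ω j i)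
    (hω : ∀ i j, G.Adj i j → 0 < ω i j)
    (h : V → ℝ) (c : ℝ) (hc : c < 0)
    (u φ : V → ℝ)
    (hu : ∀ i, glap G μ ω u i = c - h i * Real.exp (u i))
    (hφ : ∀ i, glap G μ ω φ i + c * φ i = h i) :
    ∀ i, Real.exp (-u i) ≤ φ i := by
  have hne : Nonempty V := hconn.nonempty
  obtain ⟨i₀, -, hmin⟩ := Finset.exists_min_image Finset.univ
      (fun i => φ i - Real.exp (-u i)) ⟨Classical.arbitrary V, Finset.mem_univ _⟩
  have key : 0 ≤ φ i₀ - Real.exp (-u i₀) := by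
    have hA : 0 ≤ glap G μ ω (fun i => φ i - Real.exp (-u i)) i₀ := by
      unfold glap
      apply mul_nonneg (by have := hμ i₀; positivity)
      apply Finset.sum_nonneg
      intro j hj
      have hadj := (SimpleGraph.mem_neighborFinset _ _ _).mp hj
      have hm := hmin j (Finset.mem_univ j)
      have := (hω i₀ j hadj).le
      simp only
      nlinarith
    have hconv : -(Real.exp (-u i₀)) * glap G μ ω u i₀
        ≤ glap G μ ω (fun i => Real.exp (-u i)) i₀ := by
      unfold glap
      rw [mul_left_comm]
      apply mul_le_mul_of_nonneg_left _ (by have := hμ i₀; positivity)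
      rw [Finset.mul_sum]
      apply Finset.sum_le_sum
      intro j hj
      have hadj := (SimpleGraph.mem_neighborFinset _ _ _).mp hj
      simp only
      have hx : Real.exp (-u j) = Real.exp (-u i₀) * Real.exp (u i₀ - u j) := by
        rw [← Real.exp_add]; ring_nf
      have hb := mul_le_mul_of_nonneg_left (Real.add_one_le_exp (u i₀ - u j))
        (Real.exp_pos (-u i₀)).le
      rw [← hx] at hb
      nlinarith [mul_le_mul_of_nonneg_left hb (hω i₀ j hadj).le]
    have hlin : glap G μ ω (fun i => φ i - Real.exp (-u i)) i₀
        = glap G μ ω φ i₀ - glap G μ ω (fun i => Real.exp (-u i)) i₀ := by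
      unfold glap
      rw [← mul_sub, ← Finset.sum_sub_distrib]
      congr 1
      apply Finset.sum_congr rfl
      intro j _
      ring
    have h1 := hu i₀
    have h2 := hφ i₀
    have hB : glap G μ ω (fun i => φ i - Real.exp (-u i)) i₀
        ≤ -c * (φ i₀ - Real.exp (-u i₀)) := by
      rw [hlin]
      have := Real.exp_pos (-u i₀)
      have hexp : Real.exp (-u i₀) * Real.exp (u i₀) = 1 := by
        rw [← Real.exp_add]; simp
      have h3 : Real.exp (-u i₀) * glap G μ ω u i₀ = c * Real.exp (-u i₀) - h i₀ := by
        rw [h1, mul_sub,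
          show Real.exp (-u i₀) * (h i₀ * Real.exp (u i₀))
            = h i₀ * (Real.exp (-u i₀) * Real.exp (u i₀)) from by ring, hexp]
        ring
      nlinarith [hconv, h3]
    nlinarith [hA.trans hB]
  intro i
  have := hmin i (Finset.mem_univ i)
  linarith
end

section
/- Fix f : V → ℝ, and for each c < 0 let φ^c : V → ℝ be the (unique) solution of (Δφ^c)_i + c·φ^c_i = f_i for all i ∈ V. Then for every vertex i ∈ V, c·φ^c_i → f_i as c → −∞; i.e. the function c ↦ c·φ^c_i tends to f_i along the filter atBot. -/
/-- Fix `f : V → ℝ` and for each `c < 0` let `φ c` solve `(Δ + c) (φ c) = f`.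
Then for every vertex `i`, `c * (φ c) i → f i` as `c → -∞`. -/
theorem stmt_4 {V : Type*} [Fintype V] (G : SimpleGraph V) [DecidableRel G.Adj]
    (hconn : G.Connected)
    (μ : V → ℝ) (hμ : ∀ i, 0 < μ i)
    (ω : V → V → ℝ) (hsym : ∀ i j, ω i j = ω j i)
    (hω : ∀ i j, G.Adj i j → 0 < ω i j)
    (f : V → ℝ) (φ : ℝ → V → ℝ)
    (hφ : ∀ c < (0 : ℝ), ∀ i, glap G μ ω (φ c) i + c * φ c i = f i) :
    ∀ i, Filter.Tendsto (fun c : ℝ => c * φ c i) Filter.atBot (nhds (f i)) := by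
  obtain ⟨v⟩ := hconn.nonempty
  set M : ℝ := Finset.univ.sup' ⟨v, Finset.mem_univ v⟩ (fun j => |f j|) with hM
  have hMf : ∀ j, |f j| ≤ M := fun j => by rw [hM]; exact Finset.le_sup' (fun j => |f j|) (Finset.mem_univ j)
  have hM0 : 0 ≤ M := le_trans (abs_nonneg _) (hMf v)
  -- sup bound on φ c
  have key : ∀ c < (0:ℝ), ∀ j, |φ c j| ≤ M / (-c) := by
    intro c hc j
    have hcpos : 0 < -c := by linarith
    obtain ⟨i₀, -, hi₀⟩ := Finset.exists_max_image Finset.univ (fun j => |φ c j|)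
      ⟨v, Finset.mem_univ v⟩
    have hb : ∀ k, |φ c k| ≤ |φ c i₀| := fun k => hi₀ k (Finset.mem_univ k)
    have heq := hφ c hc i₀
    have h2 : -M ≤ f i₀ := neg_le_of_neg_le (le_trans (neg_le_abs _) (hMf i₀))
    have h3 : f i₀ ≤ M := le_trans (le_abs_self _) (hMf i₀)
    have hmain : (-c) * |φ c i₀| ≤ M := by
      rcases le_or_gt 0 (φ c i₀) with h0 | h0
      · have hL : glap G μ ω (φ c) i₀ ≤ 0 := by
          apply mul_nonpos_of_nonneg_of_nonpos
          · have := hμ i₀; positivity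
          · apply Finset.sum_nonpos
            intro j hj
            have hadj : G.Adj i₀ j := (SimpleGraph.mem_neighborFinset _ _ _).1 hj
            have hle : φ c j ≤ φ c i₀ :=
              le_trans (le_abs_self _) ((abs_of_nonneg h0) ▸ hb j)
            have := hω i₀ j hadj
            nlinarith
        rw [abs_of_nonneg h0]
        nlinarith
      · have hL : 0 ≤ glap G μ ω (φ c) i₀ := by
          apply mul_nonneg
          · have := hμ i₀; positivity
          · apply Finset.sum_nonneg
            intro j hj
            have hadj : G.Adj i₀ j := (SimpleGraph.mem_neighborFinset _ _ _).1 hj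
            have hle : φ c i₀ ≤ φ c j := by
              have := hb j
              rw [abs_of_neg h0] at this
              have := neg_abs_le (φ c j)
              linarith
            have := hω i₀ j hadj
            nlinarith
        rw [abs_of_neg h0]
        nlinarith
    have : (-c) * |φ c j| ≤ M := le_trans
      (mul_le_mul_of_nonneg_left (hb j) (le_of_lt hcpos)) hmain
    rw [le_div_iff₀ hcpos]
    linarith [this]
  intro i
  set K : ℝ := (1 / μ i) * ∑ j ∈ G.neighborFinset i, ω i j * (2 * M) with hK
  have hbound : ∀ c < (0:ℝ), |c * φ c i - f i| ≤ K / (-c) := by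
    intro c hc
    have hcpos : 0 < -c := by linarith
    have heq := hφ c hc i
    have h1 : c * φ c i - f i = -glap G μ ω (φ c) i := by linarith
    rw [h1, abs_neg]
    have hμi := hμ i
    have hB : ∀ k, |φ c k| ≤ M / (-c) := key c hc
    have habs : |glap G μ ω (φ c) i| ≤
        (1 / μ i) * ∑ j ∈ G.neighborFinset i, ω i j * (2 * (M / (-c))) := by
      rw [glap, abs_mul, abs_of_nonneg (by positivity : (0:ℝ) ≤ 1 / μ i)]
      apply mul_le_mul_of_nonneg_left _ (by positivity)
      refine le_trans (Finset.abs_sum_le_sum_abs _ _) (Finset.sum_le_sum ?_)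
      intro j hj
      have hadj : G.Adj i j := (SimpleGraph.mem_neighborFinset _ _ _).1 hj
      have hωp := hω i j hadj
      rw [abs_mul, abs_of_pos hωp]
      apply mul_le_mul_of_nonneg_left _ (le_of_lt hωp)
      calc |φ c j - φ c i| ≤ |φ c j| + |φ c i| := abs_sub _ _
        _ ≤ M / (-c) + M / (-c) := add_le_add (hB j) (hB i)
        _ = 2 * (M / (-c)) := by ring
    refine le_trans habs (le_of_eq ?_)
    have hc0 : (-c) ≠ 0 := ne_of_gt hcpos
    rw [hK, Finset.mul_sum, Finset.mul_sum, Finset.sum_div]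
    apply Finset.sum_congr rfl
    intro j hj
    field_simp
  -- squeeze
  have h0 : Filter.Tendsto (fun c : ℝ => c * φ c i - f i) Filter.atBot (nhds 0) := by
    apply squeeze_zero_norm'
    · filter_upwards [Filter.eventually_lt_atBot (0:ℝ)] with c hc
      simpa using hbound c hc
    · have h1 : Filter.Tendsto (fun c : ℝ => -c) Filter.atBot Filter.atTop :=
        Filter.tendsto_neg_atBot_atTop
      have h2 : Filter.Tendsto (fun x : ℝ => K / x) Filter.atTop (nhds 0) :=
        Filter.Tendsto.div_atTop tendsto_const_nhds Filter.tendsto_id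
      exact h2.comp h1
  have := h0.add_const (f i)
  simpa using this
end

section
/- Suppose that for every c < 0 the Kazdan–Warner equation Δu = c − h·e^u has at least one solution u : V → ℝ. Then h_i ≤ 0 for all i ∈ V and h is not identically zero. -/
lemma sum_glap_eq_zero {V : Type*} [Fintype V] (G : SimpleGraph V) [DecidableRel G.Adj]
    (μ : V → ℝ) (hμ : ∀ i, 0 < μ i) (ω : V → V → ℝ) (hsym : ∀ i j, ω i j = ω j i)
    (f : V → ℝ) : ∑ i, μ i * glap G μ ω f i = 0 := by
  have h1 : ∀ i, μ i * glap G μ ω f i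
      = ∑ j, if G.Adj i j then ω i j * (f j - f i) else 0 := by
    intro i
    unfold glap
    rw [SimpleGraph.neighborFinset_eq_filter, Finset.sum_filter]
    rw [← mul_assoc, mul_one_div, div_self (hμ i).ne', one_mul]
  simp_rw [h1]
  have h3 : ∀ i j : V, (if G.Adj j i then ω j i * (f i - f j) else 0)
      = -(if G.Adj i j then ω i j * (f j - f i) else 0) := by
    intro i j
    by_cases hij : G.Adj i j
    · rw [if_pos hij, if_pos hij.symm, hsym j i]; ring
    · rw [if_neg hij, if_neg (fun hji => hij hji.symm), neg_zero]
  have h2 : ∑ i, ∑ j, (if G.Adj i j then ω i j * (f j - f i) else 0)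
      = ∑ i, ∑ j, (if G.Adj j i then ω j i * (f i - f j) else 0) := Finset.sum_comm
  have h4 : ∑ i, ∑ j, (if G.Adj j i then ω j i * (f i - f j) else 0)
      = -∑ i, ∑ j, (if G.Adj i j then ω i j * (f j - f i) else 0) := by
    rw [← Finset.sum_neg_distrib]
    exact Finset.sum_congr rfl fun i _ => by
      rw [← Finset.sum_neg_distrib]
      exact Finset.sum_congr rfl fun j _ => h3 i j
  rw [h4] at h2
  linarith

lemma glap_exp_neg_ge {V : Type*} [Fintype V] (G : SimpleGraph V) [DecidableRel G.Adj]
    (μ : V → ℝ) (hμ : ∀ i, 0 < μ i) (ω : V → V → ℝ)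
    (hω : ∀ i j, G.Adj i j → 0 < ω i j)
    (u : V → ℝ) (i : V) :
    -Real.exp (-u i) * glap G μ ω u i
      ≤ glap G μ ω (fun j => Real.exp (-u j)) i := by
  unfold glap
  rw [← mul_assoc, mul_comm (-Real.exp (-u i)) (1 / μ i), mul_assoc]
  apply mul_le_mul_of_nonneg_left _ (one_div_pos.mpr (hμ i)).le
  rw [Finset.mul_sum]
  apply Finset.sum_le_sum
  intro j hj
  have hadj : G.Adj i j := (SimpleGraph.mem_neighborFinset _ _ _).mp hj
  have hwj : 0 < ω i j := hω i j hadj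
  show -Real.exp (-u i) * (ω i j * (u j - u i))
      ≤ ω i j * (Real.exp (-u j) - Real.exp (-u i))
  have h2 : Real.exp (-u j) = Real.exp (-u i) * Real.exp (u i - u j) := by
    rw [← Real.exp_add]; ring_nf
  have h3 : Real.exp (-u i) * (u i - u j) ≤ Real.exp (-u j) - Real.exp (-u i) := by
    nlinarith [Real.exp_pos (-u i), Real.add_one_le_exp (u i - u j)]
  nlinarith [mul_le_mul_of_nonneg_left h3 hwj.le]

/-- If the Kazdan–Warner equation `Δ u = c - h e^u` has a solution for every `c < 0`,
then `h ≤ 0` and `h` is not identically zero. -/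
theorem stmt_5 {V : Type*} [Fintype V] (G : SimpleGraph V) [DecidableRel G.Adj]
    (hconn : G.Connected)
    (μ : V → ℝ) (hμ : ∀ i, 0 < μ i)
    (ω : V → V → ℝ) (hsym : ∀ i j, ω i j = ω j i)
    (hω : ∀ i j, G.Adj i j → 0 < ω i j)
    (h : V → ℝ)
    (hsol : ∀ c < (0 : ℝ), ∃ u : V → ℝ, ∀ i, glap G μ ω u i = c - h i * Real.exp (u i)) :
    (∀ i, h i ≤ 0) ∧ h ≠ 0 := by
  have hne : Nonempty V := hconn.nonempty
  set B : ℝ := -∑ i, μ i * h i with hBdef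
  have key : ∀ c : ℝ, ∀ u : V → ℝ,
      (∀ i, glap G μ ω u i = c - h i * Real.exp (u i)) →
      ∀ i, (-c) * Real.exp (-u i) + h i
        ≤ glap G μ ω (fun j => Real.exp (-u j)) i := by
    intro c u hu i
    have h1 := glap_exp_neg_ge G μ hμ ω hω u i
    rw [hu i] at h1
    have h2 : -Real.exp (-u i) * (c - h i * Real.exp (u i))
        = (-c) * Real.exp (-u i) + h i * (Real.exp (-u i) * Real.exp (u i)) := by ring
    rw [h2, ← Real.exp_add, neg_add_cancel, Real.exp_zero, mul_one] at h1
    exact h1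
  have sums : ∀ c : ℝ, ∀ u : V → ℝ,
      (∀ i, glap G μ ω u i = c - h i * Real.exp (u i)) →
      (-c) * ∑ i, μ i * Real.exp (-u i) ≤ B := by
    intro c u hu
    have h0 := sum_glap_eq_zero G μ hμ ω hsym (fun j => Real.exp (-u j))
    have h1 : ∑ i, μ i * ((-c) * Real.exp (-u i) + h i)
        ≤ ∑ i, μ i * glap G μ ω (fun j => Real.exp (-u j)) i :=
      Finset.sum_le_sum fun i _ =>
        mul_le_mul_of_nonneg_left (key c u hu i) (hμ i).le
    rw [h0] at h1
    have h2 : ∑ i, μ i * ((-c) * Real.exp (-u i) + h i)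
        = (-c) * (∑ i, μ i * Real.exp (-u i)) + ∑ i, μ i * h i := by
      rw [Finset.mul_sum, ← Finset.sum_add_distrib]
      exact Finset.sum_congr rfl fun i _ => by ring
    rw [h2] at h1
    linarith
  have hsumpos : ∀ u : V → ℝ, 0 < ∑ i, μ i * Real.exp (-u i) := fun u =>
    Finset.sum_pos (fun i _ => mul_pos (hμ i) (Real.exp_pos _)) Finset.univ_nonempty
  have hB : 0 < B := by
    obtain ⟨u, hu⟩ := hsol (-1) (by norm_num)
    have := sums (-1) u hu
    have hp := hsumpos u
    rw [neg_neg, one_mul] at this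
    linarith
  constructor
  · intro i0
    by_contra hpos
    push_neg at hpos
    set T : ℝ := ∑ j ∈ G.neighborFinset i0, ω i0 j / μ j with hTdef
    have hT : 0 ≤ T := Finset.sum_nonneg fun j hj =>
      div_nonneg (hω i0 j ((SimpleGraph.mem_neighborFinset _ _ _).mp hj)).le (hμ j).le
    have hμh : 0 < μ i0 * h i0 := mul_pos (hμ i0) hpos
    set s : ℝ := T * B / (μ i0 * h i0) + 1 with hsdef
    have hs : 0 < s := by
      have h0 : 0 ≤ T * B / (μ i0 * h i0) :=
        div_nonneg (mul_nonneg hT hB.le) hμh.le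
      rw [hsdef]
      linarith
    obtain ⟨u, hu⟩ := hsol (-s) (by linarith)
    have hsum : s * ∑ i, μ i * Real.exp (-u i) ≤ B := by
      have := sums (-s) u hu
      rwa [neg_neg] at this
    have hphi : ∀ j, Real.exp (-u j) ≤ B / (s * μ j) := by
      intro j
      have h1 : μ j * Real.exp (-u j) ≤ ∑ i, μ i * Real.exp (-u i) :=
        Finset.single_le_sum (f := fun i => μ i * Real.exp (-u i))
          (fun i _ => (mul_pos (hμ i) (Real.exp_pos _)).le) (Finset.mem_univ j)
      rw [le_div_iff₀ (mul_pos hs (hμ j))]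
      nlinarith [mul_le_mul_of_nonneg_left h1 hs.le]
    have hglap : glap G μ ω (fun j => Real.exp (-u j)) i0
        ≤ (1 / μ i0) * (T * (B / s)) := by
      unfold glap
      apply mul_le_mul_of_nonneg_left _ (one_div_pos.mpr (hμ i0)).le
      calc ∑ j ∈ G.neighborFinset i0,
              ω i0 j * ((fun j => Real.exp (-u j)) j - (fun j => Real.exp (-u j)) i0)
          ≤ ∑ j ∈ G.neighborFinset i0, ω i0 j * (B / (s * μ j)) := by
            apply Finset.sum_le_sum
            intro j hj
            have hwj : 0 < ω i0 j := hω i0 j ((SimpleGraph.mem_neighborFinset _ _ _).mp hj)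
            have := hphi j
            have hp0 : 0 < Real.exp (-u i0) := Real.exp_pos _
            simp only []
            nlinarith
        _ = T * (B / s) := by
            rw [hTdef, Finset.sum_mul]
            exact Finset.sum_congr rfl fun j hj => by
              rw [div_mul_div_comm, mul_div_assoc, mul_comm s (μ j)]
    have hkey := key (-s) u hu i0
    rw [neg_neg] at hkey
    have hphi0 : 0 < s * Real.exp (-u i0) := mul_pos hs (Real.exp_pos _)
    have hfinal : h i0 ≤ (1 / μ i0) * (T * (B / s)) := by linarith
    have hsmul : s * (μ i0 * h i0) = T * B + μ i0 * h i0 := by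
      rw [hsdef, add_mul, one_mul, div_mul_cancel₀ _ hμh.ne']
    have hlt : (1 / μ i0) * (T * (B / s)) < h i0 := by
      have e : (1 / μ i0) * (T * (B / s)) = T * B / (s * μ i0) := by
        field_simp
      rw [e, div_lt_iff₀ (mul_pos hs (hμ i0))]
      nlinarith
    linarith
  · intro h0
    rw [hBdef, h0] at hB
    simp at hB
end

section
/- Assume the average value h̄ of h is negative. Then the Kazdan–Warner equation Δu = c − h·e^u has a solution for every c < 0 if and only if h_i ≤ 0 for all i ∈ V and h is not identically zero. -/
/-!
Necessity: if `h i₀ > 0` and `u` solves the equation with `c < 0`, then at a minimum of `u` one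
gets `-c e^{-u} ≤ max(-h)` everywhere, while convexity of `exp` gives `Δ e^{-u} ≥ -e^{-u} Δu ≥ h`.
At `i₀` this yields `h i₀ ≤ C / |c|` with `C` independent of `c`, impossible for `|c|` large.

Sufficiency: solving the Poisson equation `Δv = c - K h` with `K = c / h̄ > 0` (its right-hand side
has mean zero) and shifting `v` up gives a supersolution, and a very negative constant is a
subsolution. For `k` large, `w ↦ w + (Δw - c + h e^w) / k` is monotone on the order interval
between them and maps it into itself, so Tarski's fixed point theorem yields a solution.
-/

open Finset

theorem exists_fixedPt_of_monotoneOn_Icc {α : Type*} [ConditionallyCompleteLattice α] {a b : α}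
    (hab : a ≤ b) {T : α → α} (hT : MonotoneOn T (Set.Icc a b)) (ha : a ≤ T a) (hb : T b ≤ b) :
    ∃ x ∈ Set.Icc a b, T x = x := by
  have : Fact (a ≤ b) := ⟨hab⟩
  have hmaps (x : α) (hx : x ∈ Set.Icc a b) : T x ∈ Set.Icc a b :=
    ⟨ha.trans (hT ⟨le_rfl, hab⟩ hx hx.1), (hT hx ⟨hab, le_rfl⟩ hx.2).trans hb⟩
  let f : Set.Icc a b →o Set.Icc a b := ⟨fun x => ⟨T x, hmaps x x.2⟩, fun x y hxy => hT x.2 y.2 hxy⟩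
  exact ⟨f.lfp, f.lfp.2, congrArg Subtype.val f.isFixedPt_lfp⟩

section Laplacian

variable {V : Type*} [Fintype V] {G : SimpleGraph V} [DecidableRel G.Adj]
  {μ : V → ℝ} {ω : V → V → ℝ}

variable (G μ ω) in
noncomputable def weightedDegree (i : V) : ℝ :=
  (1 / μ i) * ∑ j ∈ G.neighborFinset i, ω i j

lemma weightedDegree_nonneg (hμ : ∀ i, 0 < μ i) (hω : ∀ i j, G.Adj i j → 0 < ω i j) (i : V) :
    0 ≤ weightedDegree G μ ω i :=
  mul_nonneg (one_div_nonneg.2 (hμ i).le) <| sum_nonneg fun j hj =>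
    (hω i j ((G.mem_neighborFinset i j).1 hj)).le

lemma glap_eq_sub_weightedDegree_mul (f : V → ℝ) (i : V) :
    glap G μ ω f i =
      (1 / μ i) * ∑ j ∈ G.neighborFinset i, ω i j * f j - weightedDegree G μ ω i * f i := by
  simp only [glap, weightedDegree, mul_sub, sum_sub_distrib, ← sum_mul]
  ring

lemma glap_add_const (f : V → ℝ) (t : ℝ) (i : V) :
    glap G μ ω (fun j => f j + t) i = glap G μ ω f i := by
  simp [glap]

lemma glap_const (t : ℝ) (i : V) : glap G μ ω (fun _ => t) i = 0 := by
  simp [glap]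

variable (G μ ω) in
noncomputable def glapLinearMap : (V → ℝ) →ₗ[ℝ] (V → ℝ) where
  toFun := glap G μ ω
  map_add' f g := by
    ext i
    simp only [glap, Pi.add_apply, ← mul_add, ← sum_add_distrib]
    congr 1
    exact sum_congr rfl fun j _ => by ring
  map_smul' a f := by
    ext i
    simp only [glap, Pi.smul_apply, smul_eq_mul, RingHom.id_apply, mul_sum]
    exact sum_congr rfl fun j _ => by ring

lemma glap_sub (f g : V → ℝ) (i : V) :
    glap G μ ω (f - g) i = glap G μ ω f i - glap G μ ω g i :=
  congrFun ((glapLinearMap G μ ω).map_sub f g) i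

lemma neg_weightedDegree_mul_le_glap (hμ : ∀ i, 0 < μ i) (hω : ∀ i j, G.Adj i j → 0 < ω i j)
    {f : V → ℝ} (hf : ∀ j, 0 ≤ f j) (i : V) :
    -(weightedDegree G μ ω i * f i) ≤ glap G μ ω f i := by
  rw [glap_eq_sub_weightedDegree_mul]
  have : 0 ≤ (1 / μ i) * ∑ j ∈ G.neighborFinset i, ω i j * f j :=
    mul_nonneg (one_div_nonneg.2 (hμ i).le) <| sum_nonneg fun j hj =>
      mul_nonneg (hω i j ((G.mem_neighborFinset i j).1 hj)).le (hf j)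
  linarith

lemma glap_le_weightedDegree_mul (hμ : ∀ i, 0 < μ i) (hω : ∀ i j, G.Adj i j → 0 < ω i j)
    {f : V → ℝ} {M : ℝ} (hM : ∀ j, f j ≤ M) {i : V} (hi : 0 ≤ f i) :
    glap G μ ω f i ≤ weightedDegree G μ ω i * M := by
  have hsum : ∑ j ∈ G.neighborFinset i, ω i j * f j ≤ (∑ j ∈ G.neighborFinset i, ω i j) * M := by
    rw [sum_mul]
    exact sum_le_sum fun j hj =>
      mul_le_mul_of_nonneg_left (hM j) (hω i j ((G.mem_neighborFinset i j).1 hj)).le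
  have hdeg : weightedDegree G μ ω i * M = 1 / μ i * ((∑ j ∈ G.neighborFinset i, ω i j) * M) := by
    rw [weightedDegree, mul_assoc]
  rw [glap_eq_sub_weightedDegree_mul, hdeg]
  linarith [mul_le_mul_of_nonneg_left hsum (one_div_nonneg.2 (hμ i).le),
    mul_nonneg (weightedDegree_nonneg hμ hω i) hi]

lemma glap_nonneg_of_forall_le (hμ : ∀ i, 0 < μ i) (hω : ∀ i j, G.Adj i j → 0 < ω i j)
    {f : V → ℝ} {i : V} (hmin : ∀ j, f i ≤ f j) : 0 ≤ glap G μ ω f i :=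
  mul_nonneg (one_div_nonneg.2 (hμ i).le) <| sum_nonneg fun j hj =>
    mul_nonneg (hω i j ((G.mem_neighborFinset i j).1 hj)).le (sub_nonneg.2 (hmin j))

lemma sum_mul_glap_eq_zero (hμ : ∀ i, 0 < μ i) (hsym : ∀ i j, ω i j = ω j i) (f : V → ℝ) :
    ∑ i, μ i * glap G μ ω f i = 0 := by
  set a : V → V → ℝ := fun i j => if G.Adj i j then ω i j * (f j - f i) else 0
  have ha : ∀ i j, a j i = -a i j := by
    intro i j
    by_cases hij : G.Adj i j
    · simp only [a, if_pos hij, if_pos hij.symm, hsym j i]; ring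
    · simp only [a, if_neg hij, if_neg (mt G.adj_symm hij), neg_zero]
  have hrow : ∀ i, μ i * glap G μ ω f i = ∑ j, a i j := fun i => by
    rw [glap, ← mul_assoc, mul_one_div_cancel (hμ i).ne', one_mul,
      SimpleGraph.neighborFinset_eq_filter, sum_filter]
  have hanti : ∑ i, ∑ j, a i j = -∑ i, ∑ j, a i j := by
    conv_lhs => rw [sum_comm]
    rw [← sum_neg_distrib]
    exact sum_congr rfl fun j _ => by
      rw [← sum_neg_distrib]
      exact sum_congr rfl fun i _ => ha j i
  simp only [hrow]
  linarith

lemma eq_of_adj_of_glap_eq_zero (hμ : ∀ i, 0 < μ i) (hω : ∀ i j, G.Adj i j → 0 < ω i j)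
    {f : V → ℝ} {i j : V} (hmax : ∀ l, f l ≤ f i) (hf : glap G μ ω f i = 0) (hij : G.Adj i j) :
    f j = f i := by
  have hnonpos : ∀ l ∈ G.neighborFinset i, ω i l * (f l - f i) ≤ 0 := fun l hl =>
    mul_nonpos_of_nonneg_of_nonpos (hω i l ((G.mem_neighborFinset i l).1 hl)).le
      (sub_nonpos.2 (hmax l))
  have hsum : ∑ l ∈ G.neighborFinset i, ω i l * (f l - f i) = 0 :=
    (mul_eq_zero.1 hf).resolve_left (one_div_ne_zero (hμ i).ne')
  have := (sum_eq_zero_iff_of_nonpos hnonpos).1 hsum j ((G.mem_neighborFinset i j).2 hij)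
  have := (mul_eq_zero.1 this).resolve_left (hω i j hij).ne'
  linarith

lemma SimpleGraph.Connected.eq_of_glap_eq_zero (hconn : G.Connected) (hμ : ∀ i, 0 < μ i)
    (hω : ∀ i j, G.Adj i j → 0 < ω i j) {f : V → ℝ} (hf : glap G μ ω f = 0) (i j : V) :
    f i = f j := by
  have : Nonempty V := hconn.nonempty
  obtain ⟨m, -, hm⟩ := exists_max_image univ f univ_nonempty
  have hmax : ∀ l, f l ≤ f m := fun l => hm l (mem_univ l)
  have hconst : ∀ l, f l = f m := by
    intro l
    induction (SimpleGraph.reachable_iff_reflTransGen m l).1 (hconn.preconnected m l) with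
    | refl => rfl
    | tail _ hab ih =>
      rw [← ih] at hmax ⊢
      exact eq_of_adj_of_glap_eq_zero hμ hω hmax (congrFun hf _) hab
  rw [hconst i, hconst j]

end Laplacian

section Solvability

variable {V : Type*} [Fintype V] {G : SimpleGraph V} [DecidableRel G.Adj]
  {μ : V → ℝ} {ω : V → V → ℝ}

lemma finrank_ker_glapLinearMap_le_one (hconn : G.Connected) (hμ : ∀ i, 0 < μ i)
    (hω : ∀ i j, G.Adj i j → 0 < ω i j) :
    Module.finrank ℝ (LinearMap.ker (glapLinearMap G μ ω)) ≤ 1 := by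
  obtain ⟨i₀⟩ := hconn.nonempty
  have : Nonempty V := ⟨i₀⟩
  have hker : LinearMap.ker (glapLinearMap G μ ω) ≤ Submodule.span ℝ {(1 : V → ℝ)} := by
    intro f hf
    refine Submodule.mem_span_singleton.2 ⟨f i₀, funext fun j => ?_⟩
    simp [hconn.eq_of_glap_eq_zero hμ hω (LinearMap.mem_ker.1 hf) i₀ j]
  exact (Submodule.finrank_mono hker).trans (finrank_span_singleton one_ne_zero).le

theorem exists_glap_eq_of_sum_mul_eq_zero (hconn : G.Connected) (hμ : ∀ i, 0 < μ i)
    (hsym : ∀ i j, ω i j = ω j i) (hω : ∀ i j, G.Adj i j → 0 < ω i j) {g : V → ℝ}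
    (hg : ∑ i, μ i * g i = 0) : ∃ v, glap G μ ω v = g := by
  have : Nonempty V := hconn.nonempty
  let mass : (V → ℝ) →ₗ[ℝ] ℝ := ∑ i, μ i • LinearMap.proj i
  have hmass (f : V → ℝ) : mass f = ∑ i, μ i * f i := by simp [mass]
  have hmass_surj : Function.Surjective mass := by
    intro r
    refine ⟨fun _ => r / ∑ i, μ i, ?_⟩
    have : ∑ i, μ i ≠ 0 := (sum_pos (fun i _ => hμ i) univ_nonempty).ne'
    rw [hmass, ← sum_mul]
    field_simp
  have hrange : LinearMap.range (glapLinearMap G μ ω) ≤ LinearMap.ker mass := by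
    rintro _ ⟨f, rfl⟩
    rw [LinearMap.mem_ker, hmass]
    exact sum_mul_glap_eq_zero hμ hsym f
  have hdim_glap := LinearMap.finrank_range_add_finrank_ker (glapLinearMap G μ ω)
  have hdim_mass := LinearMap.finrank_range_add_finrank_ker mass
  rw [LinearMap.range_eq_top.2 hmass_surj, finrank_top, Module.finrank_self] at hdim_mass
  have hker := finrank_ker_glapLinearMap_le_one hconn hμ hω
  have hrange_eq := Submodule.eq_of_le_of_finrank_le hrange (by omega)
  have hg_mem : g ∈ LinearMap.ker mass := by rw [LinearMap.mem_ker, hmass, hg]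
  rw [← hrange_eq] at hg_mem
  exact hg_mem

theorem exists_glap_eq_of_le_of_le (hμ : ∀ i, 0 < μ i) (hω : ∀ i j, G.Adj i j → 0 < ω i j)
    {F : V → ℝ → ℝ} {uSub uSup : V → ℝ} {L : ℝ} (hle : uSub ≤ uSup)
    (hsub : ∀ i, F i (uSub i) ≤ glap G μ ω uSub i)
    (hsup : ∀ i, glap G μ ω uSup i ≤ F i (uSup i))
    (hF : ∀ i x y, uSub i ≤ x → x ≤ y → y ≤ uSup i → F i y - F i x ≤ L * (y - x)) :
    ∃ u, uSub ≤ u ∧ u ≤ uSup ∧ ∀ i, glap G μ ω u i = F i (u i) := by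
  have hdeg := weightedDegree_nonneg hμ hω
  set k := |L| + ∑ i, weightedDegree G μ ω i + 1
  have hk : 0 < k := by
    have := sum_nonneg fun i (_ : i ∈ univ) => hdeg i
    positivity
  have hkL (i : V) : L + weightedDegree G μ ω i ≤ k := by
    linarith [le_abs_self L, single_le_sum (fun j _ => hdeg j) (mem_univ i)]
  let T : (V → ℝ) → V → ℝ := fun w i => w i + (glap G μ ω w i - F i (w i)) / k
  have hT : MonotoneOn T (Set.Icc uSub uSup) := by
    intro w hw w' hw' hww' i
    have hlap :=
      neg_weightedDegree_mul_le_glap hμ hω (f := w' - w) (fun j => sub_nonneg.2 (hww' j)) i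
    rw [glap_sub, Pi.sub_apply] at hlap
    have hFi := hF i (w i) (w' i) (hw.1 i) (hww' i) (hw'.2 i)
    have hslack := mul_nonneg (sub_nonneg.2 (hkL i)) (sub_nonneg.2 (hww' i))
    have hdiff : T w' i - T w i = (k * (w' i - w i) + (glap G μ ω w' i - glap G μ ω w i)
        - (F i (w' i) - F i (w i))) / k := by
      simp only [T]
      field_simp
      ring
    have : 0 ≤ T w' i - T w i := by
      rw [hdiff]
      exact div_nonneg (by linarith) hk.le
    linarith
  obtain ⟨u, hu, hTu⟩ := exists_fixedPt_of_monotoneOn_Icc hle hT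
    (fun i => le_add_of_nonneg_right (div_nonneg (sub_nonneg.2 (hsub i)) hk.le))
    (fun i => add_le_of_nonpos_right (div_nonpos_of_nonpos_of_nonneg (sub_nonpos.2 (hsup i)) hk.le))
  refine ⟨u, hu.1, hu.2, fun i => ?_⟩
  have := congrFun hTu i
  simpa only [T, add_eq_left, div_eq_zero_iff, hk.ne', or_false, sub_eq_zero] using this

end Solvability

lemma Real.exp_sub_exp_le_mul_sub (x y : ℝ) : Real.exp y - Real.exp x ≤ Real.exp y * (y - x) := by
  have := mul_le_mul_of_nonneg_left (Real.add_one_le_exp (x - y)) (Real.exp_pos y).le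
  rw [← Real.exp_add, add_sub_cancel] at this
  linarith

section KazdanWarner

open Filter Real

variable {V : Type*} [Fintype V] {G : SimpleGraph V} [DecidableRel G.Adj]
  {μ : V → ℝ} {ω : V → V → ℝ} {h : V → ℝ} {c : ℝ}

variable (G μ ω) in
def IsKazdanWarnerSolution (c : ℝ) (h u : V → ℝ) : Prop :=
  ∀ i, glap G μ ω u i = c - h i * exp (u i)

lemma neg_exp_neg_mul_glap_le (hμ : ∀ i, 0 < μ i) (hω : ∀ i j, G.Adj i j → 0 < ω i j)
    (u : V → ℝ) (i : V) :
    -(exp (-u i) * glap G μ ω u i) ≤ glap G μ ω (fun j => exp (-u j)) i := by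
  have hterm : ∀ j ∈ G.neighborFinset i,
      ω i j * -(exp (-u i) * (u j - u i)) ≤ ω i j * (exp (-u j) - exp (-u i)) := fun j hj =>
    mul_le_mul_of_nonneg_left (by linarith [exp_sub_exp_le_mul_sub (-u j) (-u i)])
      (hω i j ((G.mem_neighborFinset i j).1 hj)).le
  calc -(exp (-u i) * glap G μ ω u i)
      = 1 / μ i * ∑ j ∈ G.neighborFinset i, ω i j * -(exp (-u i) * (u j - u i)) := by
        simp only [glap, mul_sum, ← sum_neg_distrib]
        exact sum_congr rfl fun j _ => by ring
    _ ≤ glap G μ ω (fun j => exp (-u j)) i :=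
        mul_le_mul_of_nonneg_left (sum_le_sum hterm) (one_div_nonneg.2 (hμ i).le)

lemma IsKazdanWarnerSolution.le_glap_exp_neg (hμ : ∀ i, 0 < μ i)
    (hω : ∀ i j, G.Adj i j → 0 < ω i j) (hc : c ≤ 0) {u : V → ℝ}
    (hu : IsKazdanWarnerSolution G μ ω c h u) (i : V) :
    h i ≤ glap G μ ω (fun j => exp (-u j)) i := by
  have hcancel : exp (-u i) * exp (u i) = 1 := by rw [← exp_add, neg_add_cancel, exp_zero]
  have hlap := neg_exp_neg_mul_glap_le hμ hω u i
  rw [hu i] at hlap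
  have : -(exp (-u i) * (c - h i * exp (u i))) = h i - c * exp (-u i) := by
    linear_combination h i * hcancel
  linarith [mul_nonneg (neg_nonneg.2 hc) (exp_pos (-u i)).le]

lemma IsKazdanWarnerSolution.neg_mul_exp_neg_le (hμ : ∀ i, 0 < μ i)
    (hω : ∀ i j, G.Adj i j → 0 < ω i j) {H : ℝ} (hc : c ≤ 0) (hH : ∀ i, -h i ≤ H) {u : V → ℝ}
    (hu : IsKazdanWarnerSolution G μ ω c h u) (j : V) :
    -c * exp (-u j) ≤ H := by
  obtain ⟨m, -, hm⟩ := exists_min_image univ u ⟨j, mem_univ j⟩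
  have hmin : ∀ l, u m ≤ u l := fun l => hm l (mem_univ l)
  have hlap := glap_nonneg_of_forall_le hμ hω hmin
  rw [hu m] at hlap
  have hcancel : exp (u m) * exp (-u m) = 1 := by rw [← exp_add, add_neg_cancel, exp_zero]
  have hat_min : -c * exp (-u m) ≤ -h m := by
    linear_combination mul_nonneg hlap (exp_pos (-u m)).le - h m * hcancel
  have hmono : -c * exp (-u j) ≤ -c * exp (-u m) :=
    mul_le_mul_of_nonneg_left (exp_le_exp.2 (neg_le_neg (hmin j))) (neg_nonneg.2 hc)
  linarith [hH m]

theorem nonpos_of_forall_exists_isKazdanWarnerSolution (hμ : ∀ i, 0 < μ i)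
    (hω : ∀ i j, G.Adj i j → 0 < ω i j)
    (hsol : ∀ c < (0 : ℝ), ∃ u, IsKazdanWarnerSolution G μ ω c h u) (i : V) :
    h i ≤ 0 := by
  set H := ∑ j, |h j|
  have hH (j : V) : -h j ≤ H :=
    (neg_le_abs _).trans (single_le_sum (fun l _ => abs_nonneg (h l)) (mem_univ j))
  set B := weightedDegree G μ ω i * H
  have hbound : ∀ c < (0 : ℝ), -c * h i ≤ B := by
    intro c hc
    obtain ⟨u, hu⟩ := hsol c hc
    have hw (j : V) : exp (-u j) ≤ H / -c :=
      (le_div_iff₀' (neg_pos.2 hc)).2 (hu.neg_mul_exp_neg_le hμ hω hc.le hH j)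
    have := (hu.le_glap_exp_neg hμ hω hc.le i).trans
      (glap_le_weightedDegree_mul hμ hω hw (exp_pos _).le)
    rw [mul_div_assoc', le_div_iff₀ (neg_pos.2 hc)] at this
    linarith
  by_contra! hpos
  have := hbound (-(|B| + 1) / h i) (div_neg_of_neg_of_pos (neg_neg_of_pos (by positivity)) hpos)
  rw [neg_div, neg_neg, div_mul_cancel₀ _ hpos.ne'] at this
  linarith [le_abs_self B]

lemma exists_kazdanWarner_supersolution (hconn : G.Connected) (hμ : ∀ i, 0 < μ i)
    (hsym : ∀ i j, ω i j = ω j i) (hω : ∀ i j, G.Adj i j → 0 < ω i j)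
    (hmass : ∑ i, μ i * h i < 0) (hle : ∀ i, h i ≤ 0) (hc : c < 0) :
    ∃ u : V → ℝ, ∀ i, glap G μ ω u i ≤ c - h i * exp (u i) := by
  have : Nonempty V := hconn.nonempty
  have hvol : 0 < ∑ i, μ i := sum_pos (fun i _ => hμ i) univ_nonempty
  set K := c * (∑ i, μ i) / ∑ i, μ i * h i
  have hmass_ne := hmass.ne
  have hK : 0 < K := div_pos_of_neg_of_neg (mul_neg_of_neg_of_pos hc hvol) hmass
  obtain ⟨v, hv⟩ : ∃ v, glap G μ ω v = fun i => c - K * h i := by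
    refine exists_glap_eq_of_sum_mul_eq_zero hconn hμ hsym hω ?_
    simp only [mul_sub, sum_sub_distrib, mul_left_comm _ K, ← mul_sum, ← sum_mul, K]
    field_simp
    ring
  have : ∀ᶠ t in atTop, ∀ i, K ≤ exp (v i + t) := eventually_all.2 fun i =>
    (tendsto_exp_atTop.comp (tendsto_atTop_add_const_left _ (v i) tendsto_id)).eventually_ge_atTop K
  obtain ⟨t, ht⟩ := this.exists
  refine ⟨fun i => v i + t, fun i => ?_⟩
  rw [glap_add_const, hv]
  linarith [mul_le_mul_of_nonpos_left (ht i) (hle i)]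

theorem exists_isKazdanWarnerSolution (hconn : G.Connected) (hμ : ∀ i, 0 < μ i)
    (hsym : ∀ i j, ω i j = ω j i) (hω : ∀ i j, G.Adj i j → 0 < ω i j)
    (hmass : ∑ i, μ i * h i < 0) (hle : ∀ i, h i ≤ 0) (hc : c < 0) :
    ∃ u, IsKazdanWarnerSolution G μ ω c h u := by
  obtain ⟨uSup, hsup⟩ := exists_kazdanWarner_supersolution hconn hμ hsym hω hmass hle hc
  obtain ⟨M, hM⟩ := (Set.finite_range uSup).bddAbove
  have : ∀ᶠ s in atBot, ∀ i, c - h i * exp s < 0 ∧ s ≤ uSup i := eventually_all.2 fun i =>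
    (((tendsto_exp_atBot.const_mul (h i)).const_sub c).eventually
      (gt_mem_nhds (by simpa using hc))).and (eventually_le_atBot (uSup i))
  obtain ⟨s, hs⟩ := this.exists
  have hF (i : V) (x y : ℝ) (hxy : x ≤ y) (hy : y ≤ uSup i) :
      c - h i * exp y - (c - h i * exp x) ≤ (∑ j, |h j|) * exp M * (y - x) := by
    have hyM : y ≤ M := hy.trans (hM ⟨i, rfl⟩)
    have hexp := mul_le_mul_of_nonneg_left (exp_sub_exp_le_mul_sub x y) (neg_nonneg.2 (hle i))
    have hcoef : -h i * exp y ≤ (∑ j, |h j|) * exp M :=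
      mul_le_mul ((neg_le_abs _).trans (single_le_sum (fun j _ => abs_nonneg (h j)) (mem_univ i)))
        (exp_le_exp.2 hyM) (exp_pos _).le (sum_nonneg fun j _ => abs_nonneg (h j))
    linarith [mul_le_mul_of_nonneg_right hcoef (sub_nonneg.2 hxy)]
  obtain ⟨u, -, -, hu⟩ := exists_glap_eq_of_le_of_le (F := fun i x => c - h i * exp x)
    (uSub := fun _ => s) hμ hω (fun i => (hs i).2)
    (fun i => by simpa only [glap_const] using (hs i).1.le) hsup
    (fun i x y _ hxy hy => hF i x y hxy hy)
  exact ⟨u, hu⟩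

end KazdanWarner

/-- Assume the average `h̄ = (∑ μ_i h_i) / (∑ μ_i)` is negative. Then the Kazdan–Warner
equation `Δ u = c - h e^u` is solvable for every `c < 0` iff `h ≤ 0` and `h ≢ 0`. -/
theorem stmt_6 {V : Type*} [Fintype V] (G : SimpleGraph V) [DecidableRel G.Adj]
    (hconn : G.Connected)
    (μ : V → ℝ) (hμ : ∀ i, 0 < μ i)
    (ω : V → V → ℝ) (hsym : ∀ i j, ω i j = ω j i)
    (hω : ∀ i j, G.Adj i j → 0 < ω i j)
    (h : V → ℝ)
    (havg : (∑ i, μ i * h i) / (∑ i, μ i) < 0) :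
    (∀ c < (0 : ℝ), ∃ u : V → ℝ, ∀ i, glap G μ ω u i = c - h i * Real.exp (u i)) ↔
      ((∀ i, h i ≤ 0) ∧ h ≠ 0) := by
  have hmass : ∑ i, μ i * h i < 0 := neg_of_div_neg_left havg (sum_nonneg fun i _ => (hμ i).le)
  constructor
  · intro hsol
    refine ⟨nonpos_of_forall_exists_isKazdanWarnerSolution hμ hω hsol, ?_⟩
    rintro rfl
    simp at hmass
  · rintro ⟨hle, -⟩ c hc
    exact exists_isKazdanWarnerSolution hconn hμ hsym hω hmass hle hc
end

section
/- Let c̃ < c < 0, let ψ : V → ℝ solve Δψ = c̃ − h·e^ψ, and let A ∈ ℝ be a constant such that h_i·e^A > c for every i ∈ V. Then A < ψ_i for every vertex i ∈ V. -/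
/-- Let `c̃ < c < 0`, let `ψ` solve `Δ ψ = c̃ - h e^ψ`, and let `A` be a constant with
`h_i e^A > c` for every `i`. Then `A < ψ_i` for every vertex `i`. -/
theorem stmt_10 {V : Type*} [Fintype V] (G : SimpleGraph V) [DecidableRel G.Adj]
    (hconn : G.Connected)
    (μ : V → ℝ) (hμ : ∀ i, 0 < μ i)
    (ω : V → V → ℝ) (hsym : ∀ i j, ω i j = ω j i)
    (hω : ∀ i j, G.Adj i j → 0 < ω i j)
    (h : V → ℝ) (c ct : ℝ) (hct : ct < c) (hc : c < 0)
    (ψ : V → ℝ) (hψ : ∀ i, glap G μ ω ψ i = ct - h i * Real.exp (ψ i))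
    (A : ℝ) (hA : ∀ i, h i * Real.exp A > c) :
    ∀ i, A < ψ i := by
  have hne : Nonempty V := hconn.nonempty
  obtain ⟨i₀, -, hmin⟩ := Finset.exists_min_image Finset.univ ψ ⟨Classical.arbitrary V, Finset.mem_univ _⟩
  have hmin' : ∀ j, ψ i₀ ≤ ψ j := fun j => hmin j (Finset.mem_univ j)
  -- glap at the minimum is nonnegative
  have hsum : 0 ≤ ∑ j ∈ G.neighborFinset i₀, ω i₀ j * (ψ j - ψ i₀) := by
    apply Finset.sum_nonneg
    intro j hj
    have hadj := (SimpleGraph.mem_neighborFinset _ _ _).mp hj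
    exact mul_nonneg (hω i₀ j hadj).le (sub_nonneg.mpr (hmin' j))
  have hglap : 0 ≤ glap G μ ω ψ i₀ := by
    unfold glap
    have := hμ i₀; exact mul_nonneg (by positivity) hsum
  rw [hψ i₀] at hglap
  have key : h i₀ * Real.exp (ψ i₀) ≤ ct := by linarith
  have hh : h i₀ < 0 := by
    nlinarith [Real.exp_pos (ψ i₀)]
  have hAlt : A < ψ i₀ := by
    by_contra hle
    push_neg at hle
    have : Real.exp (ψ i₀) ≤ Real.exp A := Real.exp_le_exp.mpr hle
    have : h i₀ * Real.exp A ≤ h i₀ * Real.exp (ψ i₀) :=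
      mul_le_mul_of_nonpos_left this hh.le
    linarith [hA i₀]
  exact fun i => lt_of_lt_of_le hAlt (hmin' i)
end

section
/- Let c ∈ ℝ, h : V → ℝ, let A ∈ ℝ be a constant with −c + h_i·e^A > 0 for every i ∈ V (so the constant function A is a strict sub solution), and let ψ : V → ℝ satisfy (Δψ)_i − c + h_i·e^{ψ_i} < 0 for every i ∈ V (a strict super solution) together with A ≤ ψ_i for all i. Then there exists u : V → ℝ with A < u_i < ψ_i for all i ∈ V solving the Kazdan–Warner equation Δu = c − h·e^u. -/
/-! The solution is a minimizer of the energy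
`J(u) = ¼ ∑_{k ∼ l} ω_{kl} (u_l - u_k)² + ∑_k μ_k (c u_k - h_k e^{u_k})` over the compact box
`A ≤ u ≤ ψ`. The partial derivative of `J` in `u_i` is `-μ_i ((Δu)_i - c + h_i e^{u_i})`.
If `u_i` sat on the lower face `u_i = A`, then `(Δu)_i ≥ (ΔA)_i` because `u ≥ A` elsewhere, so the
strict sub solution inequality makes this derivative negative and raising `u_i` would lower `J`;
the upper face is excluded in the same way by the strict super solution. So the minimizer is an
interior critical point, i.e. a solution. -/

open Finset Function Set Real

theorem IsMinOn.hasDerivAt_nonneg_of_lt_right {f : ℝ → ℝ} {a b x d : ℝ}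
    (hmin : IsMinOn f (Icc a b) x) (hx : x ∈ Icc a b) (hf : HasDerivAt f d x) (hxb : x < b) :
    0 ≤ d := by
  have hcone : b - x ∈ posTangentConeAt (Icc a b) x :=
    sub_mem_posTangentConeAt_of_segment_subset ((segment_eq_Icc hxb.le).trans_subset
      (Icc_subset_Icc_left hx.1))
  have := hmin.localize.hasFDerivWithinAt_nonneg hf.hasFDerivAt.hasFDerivWithinAt hcone
  simp only [ContinuousLinearMap.toSpanSingleton_apply, smul_eq_mul] at this
  exact nonneg_of_mul_nonneg_right this (sub_pos.2 hxb)

theorem IsMinOn.hasDerivAt_nonpos_of_left_lt {f : ℝ → ℝ} {a b x d : ℝ}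
    (hmin : IsMinOn f (Icc a b) x) (hx : x ∈ Icc a b) (hf : HasDerivAt f d x) (hax : a < x) :
    d ≤ 0 := by
  have hcone : a - x ∈ posTangentConeAt (Icc a b) x :=
    sub_mem_posTangentConeAt_of_segment_subset (by
      rw [segment_symm, segment_eq_Icc hax.le]; exact Icc_subset_Icc_right hx.2)
  have := hmin.localize.hasFDerivWithinAt_nonneg hf.hasFDerivAt.hasFDerivWithinAt hcone
  simp only [ContinuousLinearMap.toSpanSingleton_apply, smul_eq_mul] at this
  exact nonpos_of_mul_nonneg_right this (sub_neg.2 hax)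

theorem IsMinOn.comp_update {ι : Type*} [DecidableEq ι] {f : (ι → ℝ) → ℝ} {φ ψ u : ι → ℝ}
    (hmin : IsMinOn f (Icc φ ψ) u) (hu : u ∈ Icc φ ψ) (i : ι) :
    IsMinOn (fun s => f (update u i s)) (Icc (φ i) (ψ i)) (u i) := by
  intro s hs
  show f (update u i (u i)) ≤ f (update u i s)
  rw [update_eq_self]
  exact hmin ⟨le_update_iff.2 ⟨hs.1, fun j _ => hu.1 j⟩, update_le_iff.2 ⟨hs.2, fun j _ => hu.2 j⟩⟩

section KazdanWarner

variable {V : Type*} [Fintype V] (a : V → V → ℝ) (μ h : V → ℝ) (c : ℝ)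

/-- With `a = edgeWeight G ω` this is `μ_i ((Δu)_i - c + h_i e^{u_i})`. -/
noncomputable def kwDefect (u : V → ℝ) (i : V) : ℝ :=
  ∑ j, a i j * (u j - u i) - μ i * (c - h i * exp (u i))

noncomputable def kwEnergy (u : V → ℝ) : ℝ :=
  (1 / 4) * ∑ k, ∑ l, a k l * (u l - u k) ^ 2 + ∑ k, μ k * (c * u k - h k * exp (u k))

variable {a μ h c}

theorem sum_sum_mul_sub_mul_sub (ha : ∀ k l, a k l = a l k) (f g : V → ℝ) :
    ∑ k, ∑ l, a k l * (f l - f k) * (g l - g k) = -2 * ∑ k, g k * ∑ l, a k l * (f l - f k) := by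
  have hswap : ∑ k, ∑ l, a k l * (f l - f k) * g l = -∑ k, g k * ∑ l, a k l * (f l - f k) := by
    rw [Finset.sum_comm]
    simp only [Finset.mul_sum, ← Finset.sum_neg_distrib]
    refine Finset.sum_congr rfl fun k _ => Finset.sum_congr rfl fun l _ => ?_
    rw [ha]; ring
  have hsplit : ∑ k, ∑ l, a k l * (f l - f k) * (g l - g k)
      = ∑ k, ∑ l, a k l * (f l - f k) * g l - ∑ k, g k * ∑ l, a k l * (f l - f k) := by
    rw [← Finset.sum_sub_distrib]
    refine Finset.sum_congr rfl fun k _ => ?_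
    rw [Finset.mul_sum, ← Finset.sum_sub_distrib]
    exact Finset.sum_congr rfl fun l _ => by ring
  rw [hsplit, hswap]
  ring

theorem HasDerivAt.kwEnergy_comp (ha : ∀ k l, a k l = a l k) {γ : ℝ → V → ℝ} {γ' : V → ℝ}
    {t : ℝ} (hγ : HasDerivAt γ γ' t) :
    HasDerivAt (fun s => kwEnergy a μ h c (γ s)) (-∑ k, γ' k * kwDefect a μ h c (γ t) k) t := by
  have hγk : ∀ k, HasDerivAt (fun s => γ s k) (γ' k) t := hasDerivAt_pi.1 hγ
  have hdir : HasDerivAt (fun s => (1 / 4) * ∑ k, ∑ l, a k l * (γ s l - γ s k) ^ 2)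
      ((1 / 4) * ∑ k, ∑ l, a k l * (2 * (γ t l - γ t k) * (γ' l - γ' k))) t := by
    refine .const_mul _ (.fun_sum fun k _ => .fun_sum fun l _ => .const_mul _ ?_)
    simpa using ((hγk l).sub (hγk k)).fun_pow 2
  have hpot : HasDerivAt (fun s => ∑ k, μ k * (c * γ s k - h k * Real.exp (γ s k)))
      (∑ k, μ k * (c * γ' k - h k * (Real.exp (γ t k) * γ' k))) t :=
    .fun_sum fun k _ => (((hγk k).const_mul c).sub ((hγk k).exp.const_mul (h k))).const_mul (μ k)
  refine (hdir.add hpot).congr_deriv ?_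
  have hdir' : ∑ k, ∑ l, a k l * (2 * (γ t l - γ t k) * (γ' l - γ' k))
      = 2 * ∑ k, ∑ l, a k l * (γ t l - γ t k) * (γ' l - γ' k) := by
    simp only [Finset.mul_sum]
    exact Finset.sum_congr rfl fun k _ => Finset.sum_congr rfl fun l _ => by ring
  have hpot' : ∑ k, μ k * (c * γ' k - h k * (Real.exp (γ t k) * γ' k))
      = ∑ k, γ' k * (μ k * (c - h k * Real.exp (γ t k))) :=
    Finset.sum_congr rfl fun k _ => by ring
  rw [hdir', sum_sum_mul_sub_mul_sub ha, hpot']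
  simp only [kwDefect, mul_sub (γ' _), Finset.sum_sub_distrib]
  ring

theorem hasDerivAt_kwEnergy_update [DecidableEq V] (ha : ∀ k l, a k l = a l k) (u : V → ℝ)
    (i : V) (s : ℝ) :
    HasDerivAt (fun s => kwEnergy a μ h c (update u i s)) (-kwDefect a μ h c (update u i s) i) s := by
  simpa [Pi.single_apply] using (hasDerivAt_update u i s).kwEnergy_comp (μ := μ) (h := h) (c := c) ha

theorem kwDefect_le_kwDefect (ha : ∀ k l, 0 ≤ a k l) {u v : V → ℝ} (huv : u ≤ v) {i : V}
    (hi : u i = v i) : kwDefect a μ h c u i ≤ kwDefect a μ h c v i := by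
  simp only [kwDefect, hi, sub_le_sub_iff_right]
  exact Finset.sum_le_sum fun j _ => mul_le_mul_of_nonneg_left (by linarith [huv j]) (ha i j)

theorem exists_kwDefect_eq_zero (ha_symm : ∀ k l, a k l = a l k) (ha_nonneg : ∀ k l, 0 ≤ a k l)
    {φ ψ : V → ℝ} (hφ : ∀ i, 0 < kwDefect a μ h c φ i) (hψ : ∀ i, kwDefect a μ h c ψ i < 0)
    (hφψ : φ ≤ ψ) :
    ∃ u, (∀ i, φ i < u i ∧ u i < ψ i) ∧ ∀ i, kwDefect a μ h c u i = 0 := by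
  classical
  obtain ⟨u, hu, hmin⟩ := isCompact_Icc.exists_isMinOn (nonempty_Icc.2 hφψ)
    (show Continuous (kwEnergy a μ h c) by unfold kwEnergy; fun_prop).continuousOn
  have key : ∀ i, (φ i < u i ∧ u i < ψ i) ∧ kwDefect a μ h c u i = 0 := by
    intro i
    have hui : u i ∈ Icc (φ i) (ψ i) := ⟨hu.1 i, hu.2 i⟩
    have hslice := hmin.comp_update hu i
    have hderiv := hasDerivAt_kwEnergy_update (μ := μ) (h := h) (c := c) ha_symm u i (u i)
    rw [update_eq_self] at hderiv
    have hleft : u i < ψ i → kwDefect a μ h c u i ≤ 0 := fun hlt =>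
      neg_nonneg.1 (hslice.hasDerivAt_nonneg_of_lt_right hui hderiv hlt)
    have hright : φ i < u i → 0 ≤ kwDefect a μ h c u i := fun hlt =>
      neg_nonpos.1 (hslice.hasDerivAt_nonpos_of_left_lt hui hderiv hlt)
    have hφψi : φ i < ψ i := (hφψ i).lt_of_ne fun heq =>
      (lt_trans (hψ i) (hφ i)).not_ge (kwDefect_le_kwDefect ha_nonneg hφψ heq)
    have hφu : φ i < u i := (hu.1 i).lt_of_ne fun heq =>
      (hleft (heq ▸ hφψi)).not_gt ((hφ i).trans_le (kwDefect_le_kwDefect ha_nonneg hu.1 heq))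
    have huψ : u i < ψ i := (hu.2 i).lt_of_ne fun heq =>
      (hright (heq ▸ hφψi)).not_gt ((kwDefect_le_kwDefect ha_nonneg hu.2 heq).trans_lt (hψ i))
    exact ⟨⟨hφu, huψ⟩, le_antisymm (hleft huψ) (hright hφu)⟩
  exact ⟨u, fun i => (key i).1, fun i => (key i).2⟩

end KazdanWarner

section Graph

variable {V : Type*} (G : SimpleGraph V) [DecidableRel G.Adj] (ω : V → V → ℝ)

def edgeWeight (i j : V) : ℝ :=
  if G.Adj i j then ω i j else 0

variable {G ω}

theorem edgeWeight_comm (hsym : ∀ i j, ω i j = ω j i) (i j : V) :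
    edgeWeight G ω i j = edgeWeight G ω j i := by
  simp only [edgeWeight, G.adj_comm, hsym]

theorem edgeWeight_nonneg (hω : ∀ i j, G.Adj i j → 0 < ω i j) (i j : V) :
    0 ≤ edgeWeight G ω i j := by
  unfold edgeWeight
  split_ifs with hij
  exacts [(hω i j hij).le, le_rfl]

theorem kwDefect_edgeWeight [Fintype V] {μ h : V → ℝ} {c : ℝ} (f : V → ℝ) {i : V}
    (hμ : μ i ≠ 0) :
    kwDefect (edgeWeight G ω) μ h c f i = μ i * (glap G μ ω f i - c + h i * exp (f i)) := by
  have hsum : ∑ j, edgeWeight G ω i j * (f j - f i) = μ i * glap G μ ω f i := by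
    simp only [edgeWeight, ite_mul, zero_mul, Finset.sum_ite, Finset.sum_const_zero, add_zero, glap,
      ← SimpleGraph.neighborFinset_eq_filter]
    field_simp
  rw [kwDefect, hsum]
  ring

end Graph

theorem stmt_11_general {V : Type*} [Fintype V] (G : SimpleGraph V) [DecidableRel G.Adj]
    (μ : V → ℝ) (hμ : ∀ i, 0 < μ i)
    (ω : V → V → ℝ) (hsym : ∀ i j, ω i j = ω j i)
    (hω : ∀ i j, G.Adj i j → 0 < ω i j)
    (h : V → ℝ) (c : ℝ) (A : ℝ)
    (hsub : ∀ i, -c + h i * Real.exp A > 0)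
    (ψ : V → ℝ)
    (hsuper : ∀ i, glap G μ ω ψ i - c + h i * Real.exp (ψ i) < 0)
    (hAψ : ∀ i, A ≤ ψ i) :
    ∃ u : V → ℝ, (∀ i, A < u i ∧ u i < ψ i) ∧
      ∀ i, glap G μ ω u i = c - h i * Real.exp (u i) := by
  have hdefect (f : V → ℝ) (i : V) :=
    kwDefect_edgeWeight (G := G) (ω := ω) (h := h) (c := c) f (hμ i).ne'
  have hsubA : ∀ i, 0 < kwDefect (edgeWeight G ω) μ h c (fun _ => A) i := fun i => by
    rw [hdefect]
    simpa [glap] using mul_pos (hμ i) (hsub i)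
  have hsuperψ : ∀ i, kwDefect (edgeWeight G ω) μ h c ψ i < 0 := fun i => by
    rw [hdefect]
    exact mul_neg_of_pos_of_neg (hμ i) (hsuper i)
  obtain ⟨u, hbetween, hu⟩ := exists_kwDefect_eq_zero (edgeWeight_comm hsym) (edgeWeight_nonneg hω)
    hsubA hsuperψ hAψ
  refine ⟨u, hbetween, fun i => ?_⟩
  have := (mul_eq_zero.1 ((hdefect u i).symm.trans (hu i))).resolve_left (hμ i).ne'
  linarith

/-- Method of sub and super solutions: if the constant `A` is a strict sub solution
(`-c + h_i e^A > 0` for all `i`) and `ψ ≥ A` is a strict super solution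
(`(Δψ)_i - c + h_i e^{ψ_i} < 0` for all `i`), then there exists a solution `u` of
`Δ u = c - h e^u` with `A < u < ψ` pointwise. -/
theorem stmt_11 {V : Type*} [Fintype V] (G : SimpleGraph V) [DecidableRel G.Adj]
    (hconn : G.Connected)
    (μ : V → ℝ) (hμ : ∀ i, 0 < μ i)
    (ω : V → V → ℝ) (hsym : ∀ i j, ω i j = ω j i)
    (hω : ∀ i j, G.Adj i j → 0 < ω i j)
    (h : V → ℝ) (c : ℝ) (A : ℝ)
    (hsub : ∀ i, -c + h i * Real.exp A > 0)
    (ψ : V → ℝ)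
    (hsuper : ∀ i, glap G μ ω ψ i - c + h i * Real.exp (ψ i) < 0)
    (hAψ : ∀ i, A ≤ ψ i) :
    ∃ u : V → ℝ, (∀ i, A < u i ∧ u i < ψ i) ∧
      ∀ i, glap G μ ω u i = c - h i * Real.exp (u i) :=
  stmt_11_general G μ hμ ω hsym hω h c A hsub ψ hsuper hAψ
end

section
/- Fix a vertex i₀ ∈ V and real numbers c₀ < 0, A ∈ ℝ, and M ∈ ℝ. Then there exists a constant C (depending only on G, μ, ω, h, A, M, c₀ and i₀) such that: for every c with c₀ ≤ c ≤ 0 and every u : V → ℝ with (Δu)_i = c − h_i·e^{u_i} for all i, u_i ≥ A for all i, and u_{i₀} ≤ M, one has u_j ≤ C for every vertex j ∈ V. -/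
/-- Uniform upper bound: fix a vertex `i₀` and reals `c₀ < 0`, `A`, `M`. There is a
constant `C` such that every solution `u` of `Δ u = c - h e^u` with `c₀ ≤ c ≤ 0`,
`u ≥ A` everywhere, and `u_{i₀} ≤ M`, satisfies `u_j ≤ C` for all `j`. -/
theorem stmt_15 {V : Type*} [Fintype V] (G : SimpleGraph V) [DecidableRel G.Adj]
    (hconn : G.Connected)
    (μ : V → ℝ) (hμ : ∀ i, 0 < μ i)
    (ω : V → V → ℝ) (hsym : ∀ i j, ω i j = ω j i)
    (hω : ∀ i j, G.Adj i j → 0 < ω i j)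
    (h : V → ℝ) (i₀ : V) (c₀ : ℝ) (hc₀ : c₀ < 0) (A M : ℝ) :
    ∃ C : ℝ, ∀ c : ℝ, c₀ ≤ c → c ≤ 0 →
      ∀ u : V → ℝ, (∀ i, glap G μ ω u i = c - h i * Real.exp (u i)) →
        (∀ i, A ≤ u i) → u i₀ ≤ M → ∀ j, u j ≤ C := by
  classical
  set Bμ := ∑ i, μ i with hBμdef
  set Bh := ∑ i, |h i| with hBhdef
  set Sω := ∑ i, ∑ k ∈ G.neighborFinset i, ω i k with hSωdef
  have hBμ0 : 0 ≤ Bμ := Finset.sum_nonneg fun i _ => (hμ i).le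
  have hBh0 : 0 ≤ Bh := Finset.sum_nonneg fun i _ => abs_nonneg _
  have hrow : ∀ i, 0 ≤ ∑ k ∈ G.neighborFinset i, ω i k :=
    fun i => Finset.sum_nonneg fun k hk => (hω i k (by simpa using hk)).le
  have hSω0 : 0 ≤ Sω := Finset.sum_nonneg fun i _ => hrow i
  have hμle : ∀ i, μ i ≤ Bμ := by
    intro i; rw [hBμdef]; exact Finset.single_le_sum (fun k _ => (hμ k).le) (Finset.mem_univ i)
  have hhle : ∀ i, |h i| ≤ Bh := by
    intro i; rw [hBhdef]; exact Finset.single_le_sum (fun k _ => abs_nonneg (h k)) (Finset.mem_univ i)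
  have hrowle : ∀ i, ∑ k ∈ G.neighborFinset i, ω i k ≤ Sω := by
    intro i; rw [hSωdef]; exact Finset.single_le_sum (fun k _ => hrow k) (Finset.mem_univ i)
  set s := Finset.univ.filter (fun p : V × V => G.Adj p.1 p.2) with hsdef
  set wmin := if hne : s.Nonempty then s.inf' hne (fun p => ω p.1 p.2) else 1 with hwdef
  have hwpos : 0 < wmin := by
    rw [hwdef]
    split_ifs with hne
    · rw [Finset.lt_inf'_iff]
      intro p hp
      refine hω p.1 p.2 ?_
      have := hp
      rw [hsdef, Finset.mem_filter] at this
      exact this.2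
    · norm_num
  have hwle : ∀ i j, G.Adj i j → wmin ≤ ω i j := by
    intro i j hadj
    have hmem : (i, j) ∈ s := by
      rw [hsdef, Finset.mem_filter]
      exact ⟨Finset.mem_univ _, hadj⟩
    rw [hwdef, dif_pos ⟨_, hmem⟩]
    exact Finset.inf'_le _ hmem
  set F : ℝ → ℝ := fun m => m + (Bμ * Bh * Real.exp m + Sω * (m - A)) / wmin with hFdef
  have hFge : ∀ m, A ≤ m → m ≤ F m := by
    intro m hm
    have hnum : 0 ≤ Bμ * Bh * Real.exp m + Sω * (m - A) := by
      have e1 : 0 ≤ Bμ * Bh * Real.exp m :=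
        mul_nonneg (mul_nonneg hBμ0 hBh0) (Real.exp_pos m).le
      have e2 : 0 ≤ Sω * (m - A) := mul_nonneg hSω0 (by linarith)
      linarith
    have : 0 ≤ (Bμ * Bh * Real.exp m + Sω * (m - A)) / wmin := div_nonneg hnum hwpos.le
    simp only [hFdef]
    linarith
  refine ⟨F^[Fintype.card V] (max A M), ?_⟩
  intro c hc1 hc2 u hu hAu hM j
  have step : ∀ (m : ℝ) (i j : V), G.Adj i j → u i ≤ m → u j ≤ F m := by
    intro m i j hadj hui
    have hAm : A ≤ m := (hAu i).trans hui
    have hj : j ∈ G.neighborFinset i := by simpa using hadj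
    have h1 := hu i
    simp only [glap] at h1
    rw [one_div, inv_mul_eq_div, div_eq_iff (hμ i).ne'] at h1
    have hsplit : ω i j * (u j - u i) +
        ∑ k ∈ (G.neighborFinset i).erase j, ω i k * (u k - u i) =
        ∑ k ∈ G.neighborFinset i, ω i k * (u k - u i) :=
      Finset.add_sum_erase _ (fun k => ω i k * (u k - u i)) hj
    have hexp : Real.exp (u i) ≤ Real.exp m := Real.exp_le_exp.2 hui
    have habs : |h i| * Real.exp (u i) ≤ Bh * Real.exp m :=
      mul_le_mul (hhle i) hexp (Real.exp_pos _).le hBh0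
    have hrhs1 : c - h i * Real.exp (u i) ≤ Bh * Real.exp m := by
      have hna := neg_abs_le (h i)
      have hep := (Real.exp_pos (u i)).le
      nlinarith
    have hrhs : (c - h i * Real.exp (u i)) * μ i ≤ Bμ * Bh * Real.exp m := by
      have h2 : (c - h i * Real.exp (u i)) * μ i ≤ (Bh * Real.exp m) * μ i :=
        mul_le_mul_of_nonneg_right hrhs1 (hμ i).le
      have h3 : (Bh * Real.exp m) * μ i ≤ (Bh * Real.exp m) * Bμ :=
        mul_le_mul_of_nonneg_left (hμle i) (by positivity)
      nlinarith
    have herase : -(Sω * (m - A)) ≤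
        ∑ k ∈ (G.neighborFinset i).erase j, ω i k * (u k - u i) := by
      have h4 : ∀ k ∈ (G.neighborFinset i).erase j,
          ω i k * (A - m) ≤ ω i k * (u k - u i) := by
        intro k hk
        have hadjk : G.Adj i k := by
          have := Finset.mem_of_mem_erase hk
          simpa using this
        have hk1 := hAu k
        have hk2 := hω i k hadjk
        nlinarith
      have hle' : ∑ k ∈ (G.neighborFinset i).erase j, ω i k ≤ Sω := by
        refine le_trans (Finset.sum_le_sum_of_subset_of_nonneg
          (Finset.erase_subset _ _) ?_) (hrowle i)
        intro k hk _
        exact (hω i k (by simpa using hk)).le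
      have hnn : 0 ≤ ∑ k ∈ (G.neighborFinset i).erase j, ω i k :=
        Finset.sum_nonneg fun k hk =>
          (hω i k (by simpa using Finset.mem_of_mem_erase hk)).le
      calc -(Sω * (m - A))
          ≤ (∑ k ∈ (G.neighborFinset i).erase j, ω i k) * (A - m) := by nlinarith
        _ = ∑ k ∈ (G.neighborFinset i).erase j, ω i k * (A - m) := Finset.sum_mul _ _ _
        _ ≤ ∑ k ∈ (G.neighborFinset i).erase j, ω i k * (u k - u i) :=
            Finset.sum_le_sum h4
    have hkey : ω i j * (u j - u i) ≤ Bμ * Bh * Real.exp m + Sω * (m - A) := by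
      rw [h1] at hsplit
      linarith
    have hD0 : 0 ≤ Bμ * Bh * Real.exp m + Sω * (m - A) := by
      have e1 : 0 ≤ Bμ * Bh * Real.exp m :=
        mul_nonneg (mul_nonneg hBμ0 hBh0) (Real.exp_pos m).le
      have e2 : 0 ≤ Sω * (m - A) := mul_nonneg hSω0 (by linarith)
      linarith
    have hdiv : u j - u i ≤ (Bμ * Bh * Real.exp m + Sω * (m - A)) / ω i j := by
      rw [le_div_iff₀ (hω i j hadj)]
      nlinarith
    have hdiv2 : (Bμ * Bh * Real.exp m + Sω * (m - A)) / ω i j ≤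
        (Bμ * Bh * Real.exp m + Sω * (m - A)) / wmin :=
      div_le_div_of_nonneg_left hD0 hwpos (hwle i j hadj)
    have : u j ≤ u i + (Bμ * Bh * Real.exp m + Sω * (m - A)) / wmin := by linarith
    simp only [hFdef]
    linarith
  have walkbd : ∀ (a b : V) (p : G.Walk a b) (m : ℝ), u a ≤ m → u b ≤ F^[p.length] m := by
    intro a b p
    induction p with
    | nil => intro m hm; simpa using hm
    | cons hadj q ih =>
      intro m hm
      rw [SimpleGraph.Walk.length_cons, Function.iterate_succ_apply]
      exact ih (F m) (step m _ _ hadj hm)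
  set m₀ := max A M with hm₀def
  have hchain : ∀ k, A ≤ F^[k] m₀ := by
    intro k
    induction k with
    | zero => simpa [hm₀def] using le_max_left A M
    | succ n ih =>
      rw [Function.iterate_succ_apply']
      exact ih.trans (hFge _ ih)
  have hmono : ∀ k n, k ≤ n → F^[k] m₀ ≤ F^[n] m₀ := by
    intro k n hkn
    induction n with
    | zero => simp [Nat.le_zero.1 hkn]
    | succ n ih =>
      rcases Nat.lt_or_ge k (n + 1) with h' | h'
      · have h5 := ih (Nat.lt_succ_iff.1 h')
        rw [Function.iterate_succ_apply']
        exact h5.trans (hFge _ (hchain n))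
      · have : k = n + 1 := le_antisymm hkn h'
        rw [this]
  obtain ⟨p⟩ := hconn.preconnected i₀ j
  have hstart : u i₀ ≤ m₀ := hM.trans (le_max_right A M)
  have hlen : p.toPath.1.length < Fintype.card V := p.toPath.2.length_lt
  exact (walkbd i₀ j p.toPath.1 m₀ hstart).trans (hmono _ _ hlen.le)
end
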